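/- arXiv:2602.19121 — 6 statements merged into one kernel-verified Lean document; each statement's English description precedes it below -/
import Mathlib

section
/- Let h > 0, α ∈ (0,1), d ≥ 2, and let r : ℝ → ℝ≥0 be concave on [0,h]. Set r₀ = r((1−α)h). Then ∫₀^{(1−α)h} r(ξ)^{d−1} dξ ≤ (r₀^{d−1} h / (α^{d−1} d)) · (1 − α^d), and ∫_{(1−α)h}^{h} r(ξ)^{d−1} dξ ≥ (r₀^{d−1} h / (α^{d−1} d)) · α^d. -/
/-!
Put `b = (1 - α) h`. By concavity and `r h ≥ 0`, the graph of `r` lies below the cone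
`ξ ↦ r b (h - ξ) / (α h)` on `[0, b]` and above it on `[b, h]`. Integrating the `(d - 1)`-st
powers of the cone over the two pieces gives exactly the two bounds.
-/

open MeasureTheory Set intervalIntegral

section Concave

variable {𝕜 : Type*} [Field 𝕜] [LinearOrder 𝕜] [IsStrictOrderedRing 𝕜] {s : Set 𝕜} {f : 𝕜 → 𝕜}

/-- For `x ≤ y ≤ z`, the chord from `(x, f x)` to `(z, 0)` lies below the graph. -/
theorem ConcaveOn.sub_mul_le_sub_mul_of_nonneg (hf : ConcaveOn 𝕜 s f) {x y z : 𝕜}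
    (hx : x ∈ s) (hz : z ∈ s) (hxy : x ≤ y) (hyz : y ≤ z) (hfz : 0 ≤ f z) :
    (z - y) * f x ≤ (z - x) * f y := by
  rcases hxy.eq_or_lt with rfl | hxy
  · rfl
  rcases hyz.eq_or_lt with rfl | hyz
  · simpa using mul_nonneg (sub_nonneg.2 hxy.le) hfz
  have hsecant := hf.neg.secant_mono_aux1 hx hz hxy hyz
  simp only [Pi.neg_apply, mul_neg] at hsecant
  nlinarith [mul_nonneg (sub_nonneg.2 hxy.le) hfz]

theorem ConcaveOn.le_div_mul_sub_of_le (hf : ConcaveOn 𝕜 s f) {ξ b h : 𝕜} (hξ : ξ ∈ s)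
    (hh : h ∈ s) (hξb : ξ ≤ b) (hbh : b < h) (hfh : 0 ≤ f h) :
    f ξ ≤ f b / (h - b) * (h - ξ) := by
  rw [div_mul_eq_mul_div, le_div_iff₀ (sub_pos.2 hbh)]
  linarith [hf.sub_mul_le_sub_mul_of_nonneg hξ hh hξb hbh.le hfh]

theorem ConcaveOn.div_mul_sub_le_of_mem_Icc (hf : ConcaveOn 𝕜 s f) {ξ b h : 𝕜} (hb : b ∈ s)
    (hh : h ∈ s) (hξ : ξ ∈ Icc b h) (hbh : b < h) (hfh : 0 ≤ f h) :
    f b / (h - b) * (h - ξ) ≤ f ξ := by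
  rw [div_mul_eq_mul_div, div_le_iff₀ (sub_pos.2 hbh)]
  linarith [hf.sub_mul_le_sub_mul_of_nonneg hb hh hξ.1 hξ.2 hfh]

theorem ConcaveOn.image_Icc_subset_Icc {a b : 𝕜} (hf : ConcaveOn 𝕜 (Icc a b) f) :
    f '' Icc a b ⊆ Icc (min (f a) (f b)) (2 * f ((a + b) / 2) - min (f a) (f b)) := by
  rintro _ ⟨x, hx, rfl⟩
  have hab : a ≤ b := hx.1.trans hx.2
  have hmin : ∀ y ∈ Icc a b, min (f a) (f b) ≤ f y := fun y hy =>
    hf.min_le_of_mem_Icc (left_mem_Icc.2 hab) (right_mem_Icc.2 hab) hy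
  have hx' : a + b - x ∈ Icc a b := ⟨by linarith [hx.2], by linarith [hx.1]⟩
  -- `(a + b) / 2` is the midpoint of `x` and its mirror image `a + b - x`
  have hmid := hf.2 hx hx' (by norm_num : (0 : 𝕜) ≤ 1 / 2) (by norm_num : (0 : 𝕜) ≤ 1 / 2)
    (by norm_num)
  have hmid_eq : (1 / 2 : 𝕜) • x + (1 / 2 : 𝕜) • (a + b - x) = (a + b) / 2 := by
    simp only [smul_eq_mul]; ring
  rw [hmid_eq, smul_eq_mul, smul_eq_mul] at hmid
  exact ⟨hmin x hx, by linarith [hmin _ hx']⟩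

end Concave

theorem ConcaveOn.integrableOn_comp_Icc {f g : ℝ → ℝ} {a b : ℝ} (hf : ConcaveOn ℝ (Icc a b) f)
    (hg : Continuous g) : IntegrableOn (g ∘ f) (Icc a b) := by
  obtain ⟨C, hC⟩ := (isCompact_Icc (a := min (f a) (f b))
    (b := 2 * f ((a + b) / 2) - min (f a) (f b))).exists_bound_of_continuousOn hg.continuousOn
  have hcont : ContinuousOn (g ∘ f) (Ioo a b) :=
    hg.comp_continuousOn ((hf.subset Ioo_subset_Icc_self (convex_Ioo a b)).continuousOn isOpen_Ioo)
  refine (integrableOn_Icc_iff_integrableOn_Ioo).2 <|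
    .of_bound measure_Ioo_lt_top (hcont.aestronglyMeasurable measurableSet_Ioo) C ?_
  filter_upwards [ae_restrict_mem measurableSet_Ioo] with x hx
  exact hC _ (hf.image_Icc_subset_Icc (mem_image_of_mem f (Ioo_subset_Icc_self hx)))

theorem integral_mul_sub_pow (c h a b : ℝ) (m : ℕ) :
    ∫ ξ in a..b, (c * (h - ξ)) ^ m =
      c ^ m * ((h - a) ^ (m + 1) - (h - b) ^ (m + 1)) / (m + 1) := by
  simp_rw [mul_pow]
  rw [intervalIntegral.integral_const_mul, integral_comp_sub_left (· ^ m) h, integral_pow]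
  ring

theorem volumes_bounds {h α : ℝ} (hh : 0 < h) (hα : α ∈ Set.Ioo (0:ℝ) 1)
    {d : ℕ} (hd : 2 ≤ d)
    (r : ℝ → ℝ) (hrnonneg : ∀ ξ, 0 ≤ r ξ)
    (hrconc : ConcaveOn ℝ (Set.Icc 0 h) r) :
    (∫ ξ in (0:ℝ)..((1 - α) * h), r ξ ^ (d - 1)) ≤
      r ((1 - α) * h) ^ (d - 1) * h / (α ^ (d - 1) * d) * (1 - α ^ d) ∧
    r ((1 - α) * h) ^ (d - 1) * h / (α ^ (d - 1) * d) * α ^ d ≤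
      (∫ ξ in ((1 - α) * h)..h, r ξ ^ (d - 1)) := by
  obtain ⟨hα0, hα1⟩ := hα
  obtain ⟨m, rfl⟩ : ∃ m, d = m + 1 := ⟨d - 1, by omega⟩
  rw [Nat.add_sub_cancel]
  set b := (1 - α) * h
  have hbh : h - b = α * h := by ring
  have hb_mem : b ∈ Icc 0 h := ⟨by nlinarith, by nlinarith⟩
  have hh_mem : h ∈ Icc 0 h := right_mem_Icc.2 hh.le
  have hb_lt : b < h := by nlinarith
  have hint : ∀ x ∈ Icc 0 h, ∀ y ∈ Icc 0 h, IntervalIntegrable (r · ^ m) volume x y :=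
    fun x hx y hy => ((hrconc.integrableOn_comp_Icc (continuous_pow m)).mono_set
      (uIcc_subset_Icc hx hy)).intervalIntegrable
  have hcone_int : ∀ x y, IntervalIntegrable (fun ξ => (r b / (h - b) * (h - ξ)) ^ m) volume x y :=
    fun x y => (by fun_prop : Continuous _).intervalIntegrable x y
  constructor
  · calc (∫ ξ in 0..b, r ξ ^ m) ≤ ∫ ξ in 0..b, (r b / (h - b) * (h - ξ)) ^ m :=
          integral_mono_on hb_mem.1 (hint 0 (left_mem_Icc.2 hh.le) b hb_mem) (hcone_int 0 b)
            fun ξ hξ => pow_le_pow_left₀ (hrnonneg ξ) (hrconc.le_div_mul_sub_of_le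
              ⟨hξ.1, hξ.2.trans hb_mem.2⟩ hh_mem hξ.2 hb_lt (hrnonneg h)) m
      _ = _ := by
          rw [integral_mul_sub_pow, hbh, div_pow, mul_pow, mul_pow]
          push_cast
          field_simp
          ring
  · calc _ = ∫ ξ in b..h, (r b / (h - b) * (h - ξ)) ^ m := by
          rw [integral_mul_sub_pow, hbh, div_pow, mul_pow, mul_pow]
          push_cast
          field_simp
          ring
      _ ≤ ∫ ξ in b..h, r ξ ^ m :=
          integral_mono_on hb_lt.le (hcone_int b h) (hint b hb_mem h hh_mem) fun ξ hξ =>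
            pow_le_pow_left₀
              (mul_nonneg (div_nonneg (hrnonneg b) (sub_nonneg.2 hb_lt.le)) (sub_nonneg.2 hξ.2))
              (hrconc.div_mul_sub_le_of_mem_Icc hb_mem hh_mem hξ hb_lt (hrnonneg h)) m
end

section
/- Let x₁, …, x_n ∈ ℝ^d, let M ⊆ {1,…,n} be nonempty, and let x' = Σ_j w_j x_j with w_j ≥ 0, Σ_j w_j = 1, and Σ_{j∈M} w_j ≥ α for some α ∈ (0,1]. Then there exist ξ ∈ conv{x_j : j ∈ M} and ξ' ∈ conv{x₁, …, x_n} such that x' = α·ξ + (1−α)·ξ'. -/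
theorem averaging_decomposition {d n : ℕ}
    (x : Fin n → EuclideanSpace ℝ (Fin d))
    (M : Finset (Fin n)) (hM : M.Nonempty)
    (w : Fin n → ℝ) (hw : ∀ j, 0 ≤ w j) (hw1 : ∑ j, w j = 1)
    (α : ℝ) (hα : α ∈ Set.Ioc (0:ℝ) 1) (hαM : α ≤ ∑ j ∈ M, w j)
    (x' : EuclideanSpace ℝ (Fin d)) (hx' : x' = ∑ j, w j • x j) :
    ∃ ξ ∈ convexHull ℝ (x '' (M : Set (Fin n))),
      ∃ ξ' ∈ convexHull ℝ (Set.range x),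
        x' = α • ξ + (1 - α) • ξ' := by
  obtain ⟨hα0, hα1⟩ := hα
  set s : ℝ := ∑ j ∈ M, w j with hs
  have hs0 : 0 < s := lt_of_lt_of_le hα0 hαM
  have hs1 : s ≤ 1 := by
    rw [← hw1]
    exact Finset.sum_le_sum_of_subset_of_nonneg (Finset.subset_univ M)
      (fun i _ _ => hw i)
  have hξmem : M.centerMass w x ∈ convexHull ℝ (x '' (M : Set (Fin n))) := by
    apply Finset.centerMass_mem_convexHull _ (fun i hi => hw i) hs0
    intro i hi
    exact Set.mem_image_of_mem x hi
  have hξ : M.centerMass w x = s⁻¹ • ∑ j ∈ M, w j • x j := by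
    rw [Finset.centerMass]
  set v : Fin n → ℝ := fun j => w j - (if j ∈ M then (α / s) * w j else 0) with hv
  have hαs : α / s ≤ 1 := div_le_one_of_le₀ hαM hs0.le
  have hvnn : ∀ j, 0 ≤ v j := by
    intro j
    simp only [hv]
    split
    · nlinarith [hw j]
    · simpa using hw j
  have hite : ∑ j, (if j ∈ M then (α / s) * w j else 0) = α := by
    rw [Finset.sum_ite_mem, Finset.univ_inter, ← Finset.mul_sum, ← hs]
    field_simp
  have hvsum : ∑ j, v j = 1 - α := by
    simp only [hv, Finset.sum_sub_distrib, hw1, hite]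
  have hitex : ∑ j, (if j ∈ M then (α / s) * w j else 0 : ℝ) • x j
      = (α / s) • ∑ j ∈ M, w j • x j := by
    have : ∀ j, (if j ∈ M then (α / s) * w j else 0 : ℝ) • x j
        = (if j ∈ M then (α / s) • (w j • x j) else 0) := by
      intro j; split <;> simp [mul_smul]
    simp only [this]
    rw [Finset.sum_ite_mem, Finset.univ_inter, Finset.smul_sum]
  have hsplit : x' = α • M.centerMass w x + ∑ j, v j • x j := by
    rw [hx', hξ]
    simp only [hv, sub_smul, Finset.sum_sub_distrib, hitex, smul_smul]
    have : α * s⁻¹ = α / s := by ring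
    rw [this]
    abel
  rcases eq_or_lt_of_le hα1 with heq | hlt
  · -- α = 1
    obtain ⟨i0, hi0⟩ := hM
    refine ⟨M.centerMass w x, hξmem, x i0, subset_convexHull ℝ _ ⟨i0, rfl⟩, ?_⟩
    have hvzero : ∀ j, v j = 0 := by
      intro j
      have hsum0 : ∑ j, v j = 0 := by rw [hvsum, ← heq]; ring
      have := (Finset.sum_eq_zero_iff_of_nonneg (fun i _ => hvnn i)).mp hsum0
      exact this j (Finset.mem_univ j)
    rw [hsplit, ← heq]
    simp [hvzero]
  · -- α < 1
    have h1α : 0 < 1 - α := by linarith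
    refine ⟨M.centerMass w x, hξmem, Finset.univ.centerMass v x, ?_, ?_⟩
    · apply Finset.centerMass_mem_convexHull _ (fun i _ => hvnn i) (by rw [hvsum]; exact h1α)
      intro i _
      exact ⟨i, rfl⟩
    · rw [hsplit]
      congr 1
      rw [Finset.centerMass, hvsum, smul_smul, mul_inv_cancel₀ h1α.ne', one_smul]
end

section
/- Let x₁, …, x_n ∈ ℝ^d, M ⊆ {1,…,n} nonempty, and suppose x' = Σ_j w_j x_j and y' = Σ_j v_j x_j are two weighted averages with nonnegative weights summing to 1, each placing total weight at least α ∈ (0,1] on M. Then there exist u_∥ in the direction space span{x_i − x_j : i, j ∈ M} and u_res ∈ {x − y : x, y ∈ conv{x₁,…,x_n}} with x' − y' = α·u_∥ + (1−α)·u_res. -/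
/-! Removing the mass `α` from the weights on `M` proportionally writes each average as
`α • p + (1 - α) • q` with `p` in the convex hull of `x '' M` and `q` in that of all the `x j`
(when `α = 1` the remainder vanishes). Subtracting the two decompositions, `p - p'` lies in the
vector span of `x '' M`, which is the span of the differences `x i - x j` with `i, j ∈ M`. -/

open Finset
open scoped Pointwise

variable {ι E : Type*} [AddCommGroup E] [Module ℝ E]

lemma sub_mem_span_sub_of_mem_convexHull_image (x : ι → E) (M : Set ι) {p q : E}
    (hp : p ∈ convexHull ℝ (x '' M)) (hq : q ∈ convexHull ℝ (x '' M)) :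
    p - q ∈ Submodule.span ℝ {u : E | ∃ i ∈ M, ∃ j ∈ M, u = x i - x j} := by
  have hdiff : {u : E | ∃ i ∈ M, ∃ j ∈ M, u = x i - x j} = x '' M -ᵥ x '' M := by
    ext u
    simp only [Set.mem_ofPred_eq, Set.mem_vsub, Set.exists_mem_image, vsub_eq_sub, eq_comm]
  rw [hdiff, ← vectorSpan_def, ← direction_affineSpan]
  exact AffineSubspace.vsub_mem_direction (convexHull_subset_affineSpan _ hp)
    (convexHull_subset_affineSpan _ hq)

lemma sum_smul_mem_smul_convexHull [Fintype ι] [Nonempty ι] (x : ι → E) (c : ι → ℝ)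
    (hc : ∀ i, 0 ≤ c i) :
    ∑ i, c i • x i ∈ (∑ i, c i) • convexHull ℝ (Set.range x) := by
  rcases (sum_nonneg fun i _ => hc i).eq_or_lt with hsum | hsum
  · have hc0 : ∀ i, c i = 0 := fun i =>
      (sum_eq_zero_iff_of_nonneg fun i _ => hc i).mp hsum.symm i (mem_univ i)
    have hne : (convexHull ℝ (Set.range x)).Nonempty :=
      (Set.range_nonempty x).convexHull
    simp [hc0, Set.zero_smul_set hne]
  · refine ⟨univ.centerMass c x, univ.centerMass_mem_convexHull (fun i _ => hc i) hsum
      (fun i _ => Set.mem_range_self i), ?_⟩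
    simp only [Finset.centerMass, smul_inv_smul₀ hsum.ne']

lemma exists_eq_smul_mem_convexHull_image_add_mem_smul_convexHull [Fintype ι] [DecidableEq ι]
    (x : ι → E) (M : Finset ι) (w : ι → ℝ) (hw : ∀ j, 0 ≤ w j) (hw1 : ∑ j, w j = 1) {α : ℝ} (hα : 0 < α)
    (hαw : α ≤ ∑ j ∈ M, w j) :
    ∃ p ∈ convexHull ℝ (x '' M), ∃ r ∈ (1 - α) • convexHull ℝ (Set.range x),
      ∑ j, w j • x j = α • p + r := by
  set a := ∑ j ∈ M, w j
  have ha : 0 < a := hα.trans_le hαw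
  have : Nonempty ι := ⟨(nonempty_of_sum_ne_zero ha.ne').choose⟩
  set c : ι → ℝ := fun j => w j - if j ∈ M then α / a * w j else 0
  have hc : ∀ j, 0 ≤ c j := by
    intro j
    have hαa : α / a ≤ 1 := (div_le_one ha).mpr hαw
    by_cases hj : j ∈ M <;> simp only [c, hj, if_true, if_false]
    · nlinarith [hw j]
    · linarith [hw j]
  have hc1 : ∑ j, c j = 1 - α := by
    simp only [c, sum_sub_distrib, sum_ite_mem, univ_inter, ← mul_sum, hw1]
    rw [div_mul_cancel₀ α ha.ne']
  refine ⟨M.centerMass w x, M.centerMass_mem_convexHull (fun j _ => hw j) ha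
      (fun j hj => Set.mem_image_of_mem x hj), ∑ j, c j • x j,
    hc1 ▸ sum_smul_mem_smul_convexHull x c hc, ?_⟩
  simp only [c, Finset.centerMass, sub_smul, sum_sub_distrib, ite_smul, zero_smul, sum_ite_mem,
    univ_inter, mul_smul, ← smul_sum]
  module

theorem differences_decomposition_general {d n : ℕ}
    (x : Fin n → EuclideanSpace ℝ (Fin d))
    (M : Finset (Fin n))
    (w v : Fin n → ℝ)
    (hw : ∀ j, 0 ≤ w j) (hw1 : ∑ j, w j = 1)
    (hv : ∀ j, 0 ≤ v j) (hv1 : ∑ j, v j = 1)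
    (α : ℝ) (hα : α ∈ Set.Ioc (0:ℝ) 1)
    (hαw : α ≤ ∑ j ∈ M, w j) (hαv : α ≤ ∑ j ∈ M, v j)
    (x' y' : EuclideanSpace ℝ (Fin d))
    (hx' : x' = ∑ j, w j • x j) (hy' : y' = ∑ j, v j • x j) :
    ∃ upar ∈ Submodule.span ℝ {u : EuclideanSpace ℝ (Fin d) | ∃ i ∈ M, ∃ j ∈ M, u = x i - x j},
      ∃ ures ∈ {u : EuclideanSpace ℝ (Fin d) |
          ∃ p ∈ convexHull ℝ (Set.range x), ∃ q ∈ convexHull ℝ (Set.range x), u = p - q},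
        x' - y' = α • upar + (1 - α) • ures := by
  obtain ⟨p, hp, _, ⟨q, hq, rfl⟩, hwx⟩ :=
    exists_eq_smul_mem_convexHull_image_add_mem_smul_convexHull x M w hw hw1 hα.1 hαw
  obtain ⟨p', hp', _, ⟨q', hq', rfl⟩, hvx⟩ :=
    exists_eq_smul_mem_convexHull_image_add_mem_smul_convexHull x M v hv hv1 hα.1 hαv
  refine ⟨p - p', sub_mem_span_sub_of_mem_convexHull_image x M hp hp', q - q',
    ⟨q, hq, q', hq', rfl⟩, ?_⟩
  rw [hx', hy', hwx, hvx]
  module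

theorem differences_decomposition {d n : ℕ}
    (x : Fin n → EuclideanSpace ℝ (Fin d))
    (M : Finset (Fin n)) (hM : M.Nonempty)
    (w v : Fin n → ℝ)
    (hw : ∀ j, 0 ≤ w j) (hw1 : ∑ j, w j = 1)
    (hv : ∀ j, 0 ≤ v j) (hv1 : ∑ j, v j = 1)
    (α : ℝ) (hα : α ∈ Set.Ioc (0:ℝ) 1)
    (hαw : α ≤ ∑ j ∈ M, w j) (hαv : α ≤ ∑ j ∈ M, v j)
    (x' y' : EuclideanSpace ℝ (Fin d))
    (hx' : x' = ∑ j, w j • x j) (hy' : y' = ∑ j, v j • x j) :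
    ∃ upar ∈ Submodule.span ℝ {u : EuclideanSpace ℝ (Fin d) | ∃ i ∈ M, ∃ j ∈ M, u = x i - x j},
      ∃ ures ∈ {u : EuclideanSpace ℝ (Fin d) |
          ∃ p ∈ convexHull ℝ (Set.range x), ∃ q ∈ convexHull ℝ (Set.range x), u = p - q},
        x' - y' = α • upar + (1 - α) • ures :=
  differences_decomposition_general x M w v hw hw1 hv hv1 α hα hαw hαv x' y' hx' hy'
end

section
/- Consider n processes in ℝ^d executing an averaging algorithm: in each round t, x_i(t) = Σ_j w_{ij}(t) x_j(t−1) with nonnegative weights summing to 1, where each round's communication graph is d-broadcastable with broadcasting set M(t) and Σ_{j∈M(t)} w_{ij}(t) ≥ α > 0 for all i. Let P(t) be the convex hull of {x_i(t)}. Then for every round t ≥ 1, vol(P(t)) ≤ (1 − α^d) · vol(P(t−1)). -/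
/-!
Each new point is `α • m + (1 - α) • k` with `m` in the convex hull `Q` of the broadcasting points
and `k` in `K = P(t - 1)`, so `P(t) ⊆ α • Q + (1 - α) • K`. At most `d` points lie on a hyperplane
`f = c`, so `f` takes values in `α c + (1 - α) [min_K f, max_K f]` on `α • Q + (1 - α) • K`.
Shrinking the part of `K` above the hyperplane by the factor `α` towards a maximiser of `f` on `K`,
and the part below towards a minimiser, gives two subsets of `K` outside that range of values,
disjoint from `α • Q + (1 - α) • K` and of total volume `α ^ d * vol K`.
-/

open MeasureTheory Set Pointwise Module AffineMap

section Module

variable {E : Type*} [AddCommGroup E] [Module ℝ E]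

theorem Convex.sum_smul_mem_smul {ι : Type*} {C : Set E} (hC : Convex ℝ C) (hCne : C.Nonempty)
    {t : Finset ι} {w : ι → ℝ} {z : ι → E} (hw : ∀ i ∈ t, 0 ≤ w i) (hz : ∀ i ∈ t, z i ∈ C) :
    ∑ i ∈ t, w i • z i ∈ (∑ i ∈ t, w i) • C := by
  rcases (Finset.sum_nonneg hw).eq_or_lt with hzero | hpos
  · have hw0 : ∀ i ∈ t, w i = 0 := (Finset.sum_eq_zero_iff_of_nonneg hw).1 hzero.symm
    rw [← hzero, zero_smul_set hCne, Finset.sum_eq_zero fun i hi => by rw [hw0 i hi, zero_smul]]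
    rfl
  · exact ⟨_, hC.centerMass_mem hw hpos hz, smul_inv_smul₀ hpos.ne' _⟩

theorem Convex.smul_add_smul_subset_smul_add_smul {Q K : Set E} (hQ : Convex ℝ Q)
    (hK : Convex ℝ K) (hQK : Q ⊆ K) {α β : ℝ} (hα : 0 ≤ α) (hαβ : α ≤ β) (hβ : β ≤ 1) :
    β • Q + (1 - β) • K ⊆ α • Q + (1 - α) • K :=
  calc β • Q + (1 - β) • K = α • Q + (β - α) • Q + (1 - β) • K := by
        rw [← hQ.add_smul hα (sub_nonneg.2 hαβ), add_sub_cancel]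
    _ ⊆ α • Q + (β - α) • K + (1 - β) • K := by gcongr
    _ = α • Q + (1 - α) • K := by
        rw [add_assoc, ← hK.add_smul (sub_nonneg.2 hαβ) (sub_nonneg.2 hβ), sub_add_sub_cancel']

theorem sum_smul_mem_smul_convexHull_add_smul_convexHull {ι : Type*} [Fintype ι] [DecidableEq ι]
    {w : ι → ℝ} (hw0 : ∀ j, 0 ≤ w j) (hw1 : ∑ j, w j = 1) (z : ι → E) {s : Finset ι} {α : ℝ}
    (hα : 0 < α) (hαs : α ≤ ∑ j ∈ s, w j) :
    ∑ j, w j • z j ∈ α • convexHull ℝ (z '' s) + (1 - α) • convexHull ℝ (range z) := by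
  have hs : s.Nonempty := Finset.nonempty_of_sum_ne_zero (hα.trans_le hαs).ne'
  have hcompl : ∑ j ∈ sᶜ, w j = 1 - ∑ j ∈ s, w j :=
    eq_sub_of_add_eq' (hw1 ▸ Finset.sum_add_sum_compl s w)
  have hs1 : ∑ j ∈ s, w j ≤ 1 := hw1 ▸
    Finset.sum_le_sum_of_subset_of_nonneg (Finset.subset_univ s) fun j _ _ => hw0 j
  refine (convex_convexHull ℝ _).smul_add_smul_subset_smul_add_smul (convex_convexHull ℝ _)
    (convexHull_mono (image_subset_range z s)) hα.le hαs hs1 ?_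
  rw [← Finset.sum_add_sum_compl s, ← hcompl]
  have hQ : (convexHull ℝ (z '' s)).Nonempty :=
    ((Finset.coe_nonempty.2 hs).image z).mono (subset_convexHull ℝ _)
  exact add_mem_add
    ((convex_convexHull ℝ _).sum_smul_mem_smul hQ (fun j _ => hw0 j)
      fun j hj => subset_convexHull ℝ _ (mem_image_of_mem z hj))
    ((convex_convexHull ℝ _).sum_smul_mem_smul (hQ.mono (convexHull_mono (image_subset_range z s)))
      (fun j _ => hw0 j) fun j _ => subset_convexHull ℝ _ (mem_range_self j))

theorem LinearMap.map_homothety (f : E →ₗ[ℝ] ℝ) (p : E) (r : ℝ) (y : E) :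
    f (homothety p r y) = r * f y + (1 - r) * f p := by
  rw [homothety_apply, vsub_eq_sub, vadd_eq_add, map_add, map_smul, map_sub, smul_eq_mul]
  ring

theorem Convex.homothety_image_subset {K S : Set E} (hK : Convex ℝ K) (hSK : S ⊆ K) {p : E}
    (hp : p ∈ K) {α : ℝ} (hα0 : 0 ≤ α) (hα1 : α ≤ 1) : homothety p α '' S ⊆ K := by
  rintro _ ⟨y, hy, rfl⟩
  rw [homothety_eq_lineMap]
  exact hK.lineMap_mem hp (hSK hy) ⟨hα0, hα1⟩

end Module

theorem exists_ne_zero_forall_mem_affineSpan_apply_eq {𝕜 V ι : Type*} [Field 𝕜] [AddCommGroup V]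
    [Module 𝕜 V] (z : ι → V) {s : Finset ι} (hs : s.Nonempty) (hcard : s.card ≤ finrank 𝕜 V) :
    ∃ f : V →ₗ[𝕜] 𝕜, f ≠ 0 ∧ ∃ c, ∀ y ∈ affineSpan 𝕜 (z '' s), f y = c := by
  classical
  obtain ⟨j, hj⟩ := hs
  have hspan : finrank 𝕜 (vectorSpan 𝕜 (z '' s)) < finrank 𝕜 V := by
    obtain ⟨m, hm⟩ : ∃ m, s.card = m + 1 := Nat.exists_eq_add_one.2 (Finset.card_pos.2 ⟨j, hj⟩)
    have := finrank_vectorSpan_image_finset_le 𝕜 z s hm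
    rw [Finset.coe_image] at this
    omega
  obtain ⟨f, hf, hker⟩ := Submodule.exists_le_ker_of_lt_top _
    (Submodule.lt_top_of_finrank_lt_finrank hspan)
  refine ⟨f, hf, f (z j), fun y hy => ?_⟩
  have hyj : y - z j ∈ vectorSpan 𝕜 (z '' s) := by
    rw [← direction_affineSpan]
    exact AffineSubspace.vsub_mem_direction hy (subset_affineSpan 𝕜 _ (mem_image_of_mem z hj))
  simpa [sub_eq_zero] using hker hyj

theorem measure_add_add_le_of_separated {X : Type*} [MeasurableSpace X] (μ : Measure X)
    {K T U L : Set X} (hTK : T ⊆ K) (hUK : U ⊆ K) (hLK : L ⊆ K) (hU : NullMeasurableSet U μ)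
    (hL : NullMeasurableSet L μ) {g : X → ℝ} {a b : ℝ} (hab : a ≤ b)
    (hTg : ∀ y ∈ T, a ≤ g y ∧ g y ≤ b) (hUg : ∀ y ∈ U, b < g y) (hLg : ∀ y ∈ L, g y < a) :
    μ T + (μ U + μ L) ≤ μ K := by
  have hTU : Disjoint T U := disjoint_left.2 fun y hyT hyU => (hUg y hyU).not_ge (hTg y hyT).2
  have hTUL : Disjoint (T ∪ U) L := by
    refine disjoint_left.2 fun y hy hyL => (hLg y hyL).not_ge ?_
    rcases hy with hyT | hyU
    exacts [(hTg y hyT).1, hab.trans (hUg y hyU).le]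
  calc μ T + (μ U + μ L) = μ (T ∪ U ∪ L) := by
        rw [measure_union₀ hL hTUL.aedisjoint, measure_union₀ hU hTU.aedisjoint, add_assoc]
    _ ≤ μ K := measure_mono (union_subset (union_subset hTK hUK) hLK)

section AddHaar

variable {E : Type*} [NormedAddCommGroup E] [NormedSpace ℝ E] [FiniteDimensional ℝ E]
  [MeasurableSpace E] [BorelSpace E] (μ : Measure E) [μ.IsAddHaarMeasure]

theorem measure_setOf_apply_eq_eq_zero {f : E →ₗ[ℝ] ℝ} (hf : f ≠ 0) (c : ℝ) :
    μ {y | f y = c} = 0 := by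
  obtain ⟨v, hv⟩ : ∃ v, f v ≠ 0 := by simpa [LinearMap.ext_iff] using hf
  have hlevel : {y | f y = c} = (· + -((c / f v) • v)) ⁻¹' (LinearMap.ker f) := by
    ext y
    simp [← sub_eq_add_neg, sub_eq_zero, hv]
  rw [hlevel, measure_preimage_add_right]
  exact Measure.addHaar_submodule μ _ (mt LinearMap.ker_eq_top.mp hf)

theorem measure_le_measure_inter_lt_add {f : E →ₗ[ℝ] ℝ} (hf : f ≠ 0) (K : Set E) (c : ℝ) :
    μ K ≤ μ (K ∩ {y | c < f y}) + μ (K ∩ {y | f y < c}) := by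
  have hK : K ⊆ (K ∩ {y | c < f y}) ∪ (K ∩ {y | f y < c}) ∪ {y | f y = c} := by
    intro y hy
    rcases lt_trichotomy (f y) c with h | h | h
    exacts [.inl (.inr ⟨hy, h⟩), .inr h, .inl (.inl ⟨hy, h⟩)]
  calc μ K ≤ μ ((K ∩ {y | c < f y}) ∪ (K ∩ {y | f y < c}) ∪ {y | f y = c}) := measure_mono hK
    _ ≤ μ ((K ∩ {y | c < f y}) ∪ (K ∩ {y | f y < c})) + μ {y | f y = c} := measure_union_le _ _
    _ ≤ μ (K ∩ {y | c < f y}) + μ (K ∩ {y | f y < c}) := by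
      rw [measure_setOf_apply_eq_eq_zero μ hf, add_zero]
      exact measure_union_le _ _

theorem measure_smul_add_smul_add_le {K Q : Set E} (hK : Convex ℝ K) (hKc : IsCompact K)
    (hQK : Q ⊆ K) {f : E →ₗ[ℝ] ℝ} (hf : f ≠ 0) {c : ℝ} (hQc : ∀ q ∈ Q, f q = c) {α : ℝ}
    (hα0 : 0 < α) (hα1 : α ≤ 1) :
    μ (α • Q + (1 - α) • K) + ENNReal.ofReal (α ^ finrank ℝ E) * μ K ≤ μ K := by
  rcases K.eq_empty_or_nonempty with rfl | hKne
  · simp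
  obtain ⟨p, hpK, hp⟩ := hKc.exists_isMaxOn hKne f.continuous_of_finiteDimensional.continuousOn
  obtain ⟨q, hqK, hq⟩ := hKc.exists_isMinOn hKne f.continuous_of_finiteDimensional.continuousOn
  set U := homothety p α '' (K ∩ {y | c < f y})
  set L := homothety q α '' (K ∩ {y | f y < c})
  have hT : ∀ y ∈ α • Q + (1 - α) • K,
      α * c + (1 - α) * f q ≤ f y ∧ f y ≤ α * c + (1 - α) * f p := by
    rintro _ ⟨_, ⟨y, hy, rfl⟩, _, ⟨k, hk, rfl⟩, rfl⟩
    simp only [map_add, map_smul, smul_eq_mul, hQc y hy]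
    have hkp : f k ≤ f p := hp hk
    have hqk : f q ≤ f k := hq hk
    constructor <;> nlinarith
  have hU : ∀ y ∈ U, α * c + (1 - α) * f p < f y := by
    rintro _ ⟨y, ⟨-, hy : c < f y⟩, rfl⟩
    rw [f.map_homothety]
    nlinarith
  have hL : ∀ y ∈ L, f y < α * c + (1 - α) * f q := by
    rintro _ ⟨y, ⟨-, hy : f y < c⟩, rfl⟩
    rw [f.map_homothety]
    nlinarith
  have hqp : f q ≤ f p := hq hpK
  have hTK : α • Q + (1 - α) • K ⊆ K := (add_subset_add_right (smul_set_mono hQK)).trans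
    (hK.set_combo_subset hα0.le (by linarith) (by ring))
  have hUm : NullMeasurableSet U μ :=
    ((hK.inter (convex_halfSpace_gt f.isLinear c)).affine_image _).nullMeasurableSet (μ := μ)
  have hLm : NullMeasurableSet L μ :=
    ((hK.inter (convex_halfSpace_lt f.isLinear c)).affine_image _).nullMeasurableSet (μ := μ)
  refine le_trans ?_ (measure_add_add_le_of_separated μ hTK
    (hK.homothety_image_subset inter_subset_left hpK hα0.le hα1)
    (hK.homothety_image_subset inter_subset_left hqK hα0.le hα1) hUm hLm (by nlinarith) hT hU hL)
  rw [Measure.addHaar_image_homothety, Measure.addHaar_image_homothety,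
    abs_of_pos (pow_pos hα0 _), ← mul_add]
  gcongr
  exact measure_le_measure_inter_lt_add μ hf K c

theorem measure_smul_add_smul_le {K Q : Set E} (hK : Convex ℝ K) (hKc : IsCompact K)
    (hQK : Q ⊆ K) {f : E →ₗ[ℝ] ℝ} (hf : f ≠ 0) {c : ℝ} (hQc : ∀ q ∈ Q, f q = c) {α : ℝ}
    (hα0 : 0 < α) (hα1 : α ≤ 1) :
    μ (α • Q + (1 - α) • K) ≤ ENNReal.ofReal (1 - α ^ finrank ℝ E) * μ K := by
  have hKfin : μ K ≠ ⊤ := hKc.measure_lt_top.ne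
  rw [ENNReal.ofReal_sub _ (by positivity), ENNReal.ofReal_one, ENNReal.sub_mul fun _ _ => hKfin,
    one_mul]
  exact ENNReal.le_sub_of_add_le_right (ENNReal.mul_ne_top ENNReal.ofReal_ne_top hKfin)
    (measure_smul_add_smul_add_le μ hK hKc hQK hf hQc hα0 hα1)

end AddHaar

theorem averaging_volume_contraction_general {d n : ℕ}
    (x : ℕ → Fin n → EuclideanSpace ℝ (Fin d))
    (w : ℕ → Fin n → Fin n → ℝ)
    (M : ℕ → Finset (Fin n))
    (α : ℝ) (hα : 0 < α)
    (hMcard : ∀ t, (M t).card ≤ d)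
    (hwnonneg : ∀ t i j, 0 ≤ w t i j)
    (hwsum : ∀ t i, ∑ j, w t i j = 1)
    (hbw : ∀ t : ℕ, ∀ i, α ≤ ∑ j ∈ M (t + 1), w (t + 1) i j)
    (hupd : ∀ t : ℕ, ∀ i, x (t + 1) i = ∑ j, w (t + 1) i j • x t j) :
    ∀ t : ℕ,
      volume (convexHull ℝ (Set.range (x (t + 1)))) ≤
        ENNReal.ofReal (1 - α ^ d) * volume (convexHull ℝ (Set.range (x t))) := by
  intro t
  rcases isEmpty_or_nonempty (Fin n) with _ | ⟨⟨i⟩⟩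
  · simp [range_eq_empty]
  have hα1 : α ≤ 1 := (hbw t i).trans <| hwsum (t + 1) i ▸
    Finset.sum_le_sum_of_subset_of_nonneg (Finset.subset_univ _) fun j _ _ => hwnonneg _ _ _
  have hM : (M (t + 1)).Nonempty := Finset.nonempty_of_sum_ne_zero (hα.trans_le (hbw t i)).ne'
  obtain ⟨f, hf, c, hfc⟩ := exists_ne_zero_forall_mem_affineSpan_apply_eq (x t) hM
    ((hMcard (t + 1)).trans (finrank_euclideanSpace_fin).ge)
  have hstep : convexHull ℝ (range (x (t + 1))) ⊆
      α • convexHull ℝ (x t '' M (t + 1)) + (1 - α) • convexHull ℝ (range (x t)) :=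
    convexHull_min (range_subset_iff.2 fun i => hupd t i ▸
        sum_smul_mem_smul_convexHull_add_smul_convexHull (hwnonneg _ i) (hwsum _ i) _ hα (hbw t i))
      (((convex_convexHull ℝ _).smul α).add ((convex_convexHull ℝ _).smul (1 - α)))
  calc volume (convexHull ℝ (range (x (t + 1))))
      ≤ volume (α • convexHull ℝ (x t '' M (t + 1)) + (1 - α) • convexHull ℝ (range (x t))) :=
        measure_mono hstep
    _ ≤ ENNReal.ofReal (1 - α ^ d) * volume (convexHull ℝ (range (x t))) := by
        simpa only [finrank_euclideanSpace_fin] using measure_smul_add_smul_le volume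
          (convex_convexHull ℝ _) ((finite_range _).isCompact_convexHull ℝ)
          (convexHull_mono (image_subset_range _ _)) hf
          (fun q hq => hfc q (convexHull_subset_affineSpan _ hq)) hα hα1

theorem averaging_volume_contraction {d n : ℕ}
    (x : ℕ → Fin n → EuclideanSpace ℝ (Fin d))
    (w : ℕ → Fin n → Fin n → ℝ)
    (M : ℕ → Finset (Fin n))
    (α : ℝ) (hα : 0 < α)
    (hMcard : ∀ t, (M t).card ≤ d)
    (hMne : ∀ t, (M t).Nonempty)
    (hwnonneg : ∀ t i j, 0 ≤ w t i j)
    (hwsum : ∀ t i, ∑ j, w t i j = 1)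
    (hbw : ∀ t : ℕ, ∀ i, α ≤ ∑ j ∈ M (t + 1), w (t + 1) i j)
    (hupd : ∀ t : ℕ, ∀ i, x (t + 1) i = ∑ j, w (t + 1) i j • x t j) :
    ∀ t : ℕ,
      volume (convexHull ℝ (Set.range (x (t + 1)))) ≤
        ENNReal.ofReal (1 - α ^ d) * volume (convexHull ℝ (Set.range (x t))) :=
  averaging_volume_contraction_general x w M α hα hMcard hwnonneg hwsum hbw hupd
end

section
/- Let G₁, …, G_t be directed graphs on [n], each containing all self-loops, and each k-rooted with a common root set M ⊆ [n] of size at most k. If t ≥ n, then M is a broadcasting set of the product graph G₁ ∘ ⋯ ∘ G_t, i.e., every vertex has an incoming edge from some vertex of M in the product. -/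
/-- The edge relation of the product graph `G₁ ∘ ⋯ ∘ G_t` of a list of graphs. -/
def prodRel {n : ℕ} : List (Fin n → Fin n → Prop) → (Fin n → Fin n → Prop)
  | [], i, j => i = j
  | G :: Gs, i, j => ∃ u, G i u ∧ prodRel Gs u j

/-!
Let `S` be the set of vertices reached from `M` by the product of the first `r` graphs. Passing
to the next graph `G`, every vertex of `S` stays reached through its self-loop, and if `S` is not
yet everything, a `G`-path from `M` to a vertex outside `S` leaves `S` along some edge, adding a
new vertex. So `S` gains a vertex at each step until it is all of `[n]`, which happens after at
most `n - |M|` steps.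
-/

theorem Relation.ReflTransGen.exists_rel_of_not {α : Type*} {r : α → α → Prop} {p : α → Prop}
    {a b : α} (h : Relation.ReflTransGen r a b) (ha : p a) (hb : ¬p b) :
    ∃ c d, p c ∧ ¬p d ∧ r c d := by
  induction h with
  | refl => exact absurd ha hb
  | @tail c d _ hcd ih =>
    by_cases hc : p c
    · exact ⟨c, d, hc, hb, hcd⟩
    · exact ih hc

section StepImage

variable {α : Type*} [Fintype α]

noncomputable def stepImage (G : α → α → Prop) (S : Finset α) : Finset α := by
  classical exact Finset.univ.filter fun j => ∃ i ∈ S, G i j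

variable {G : α → α → Prop} {S : Finset α}

@[simp]
theorem mem_stepImage {j : α} : j ∈ stepImage G S ↔ ∃ i ∈ S, G i j := by
  simp [stepImage]

theorem subset_stepImage (hG : ∀ v, G v v) : S ⊆ stepImage G S :=
  fun j hj => mem_stepImage.2 ⟨j, hj, hG j⟩

theorem ssubset_stepImage (hG : ∀ v, G v v)
    (hroot : ∀ v, ∃ m ∈ S, Relation.ReflTransGen G m v) (hS : S ≠ Finset.univ) :
    S ⊂ stepImage G S := by
  obtain ⟨w, -, hw⟩ := Finset.exists_of_ssubset (Finset.ssubset_univ_iff.2 hS)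
  obtain ⟨m, hm, hmw⟩ := hroot w
  obtain ⟨i, j, hi, hj, hij⟩ := hmw.exists_rel_of_not (p := (· ∈ S)) hm hw
  exact Finset.ssubset_iff_subset_ne.2
    ⟨subset_stepImage hG, fun h => hj (h ▸ mem_stepImage.2 ⟨i, hi, hij⟩)⟩

theorem min_card_add_one_le_card_stepImage (hG : ∀ v, G v v)
    (hroot : ∀ v, ∃ m ∈ S, Relation.ReflTransGen G m v) :
    min (Fintype.card α) (S.card + 1) ≤ (stepImage G S).card := by
  by_cases hS : S = Finset.univ
  · subst hS
    exact (min_le_left _ _).trans (Finset.card_le_card (subset_stepImage hG))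
  · exact (min_le_right _ _).trans (Finset.card_lt_card (ssubset_stepImage hG hroot hS))

end StepImage

theorem exists_prodRel_cons {n : ℕ} {G : Fin n → Fin n → Prop} {Gs : List (Fin n → Fin n → Prop)}
    {S : Finset (Fin n)} {v : Fin n} :
    (∃ m ∈ S, prodRel (G :: Gs) m v) ↔ ∃ u ∈ stepImage G S, prodRel Gs u v := by
  simp only [prodRel, mem_stepImage]
  constructor
  · rintro ⟨m, hm, u, hmu, huv⟩
    exact ⟨u, ⟨m, hm, hmu⟩, huv⟩
  · rintro ⟨u, ⟨m, hm, hmu⟩, huv⟩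
    exact ⟨m, hm, u, hmu, huv⟩

theorem exists_prodRel_of_length_add_card {n : ℕ} (l : List (Fin n → Fin n → Prop))
    (hrefl : ∀ G ∈ l, ∀ v, G v v) (S : Finset (Fin n))
    (hrooted : ∀ G ∈ l, ∀ v, ∃ m ∈ S, Relation.ReflTransGen G m v)
    (hlen : n ≤ l.length + S.card) (v : Fin n) :
    ∃ m ∈ S, prodRel l m v := by
  induction l generalizing S with
  | nil =>
    have hS : S = Finset.univ := Finset.eq_univ_of_card S <| by
      rw [Fintype.card_fin]
      exact le_antisymm (card_finset_fin_le S) (by simpa using hlen)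
    exact ⟨v, hS ▸ Finset.mem_univ v, rfl⟩
  | cons G Gs ih =>
    have hG := hrefl G List.mem_cons_self
    have hSS' := subset_stepImage (S := S) hG
    have hlen' : n ≤ Gs.length + (stepImage G S).card := by
      have := min_card_add_one_le_card_stepImage hG (hrooted G List.mem_cons_self)
      rw [Fintype.card_fin] at this
      rw [List.length_cons] at hlen
      omega
    refine exists_prodRel_cons.2 (ih (fun H hH => hrefl H (List.mem_cons_of_mem G hH)) _
      (fun H hH w => ?_) hlen')
    obtain ⟨m, hm, hmw⟩ := hrooted H (List.mem_cons_of_mem G hH) w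
    exact ⟨m, hSS' hm, hmw⟩

theorem rooted_product_broadcastable_general {n : ℕ}
    (l : List (Fin n → Fin n → Prop))
    (hrefl : ∀ G ∈ l, ∀ v, G v v)
    (M : Finset (Fin n))
    (hrooted : ∀ G ∈ l, ∀ v : Fin n, ∃ m ∈ M, Relation.ReflTransGen G m v)
    (hlen : n ≤ l.length) :
    ∀ v : Fin n, ∃ m ∈ M, prodRel l m v :=
  exists_prodRel_of_length_add_card l hrefl M hrooted (by omega)

theorem rooted_product_broadcastable {n k : ℕ}
    (l : List (Fin n → Fin n → Prop))
    (hrefl : ∀ G ∈ l, ∀ v, G v v)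
    (M : Finset (Fin n)) (hMcard : M.card ≤ k)
    (hrooted : ∀ G ∈ l, ∀ v : Fin n, ∃ m ∈ M, Relation.ReflTransGen G m v)
    (hlen : n ≤ l.length) :
    ∀ v : Fin n, ∃ m ∈ M, prodRel l m v :=
  rooted_product_broadcastable_general l hrefl M hrooted hlen
end

section
/- Consider n processes in ℝ^d executing an averaging algorithm where each round's communication graph is k-broadcastable (k ≥ 1) with broadcasting set M(t) and minimum broadcasting weight α > 0, i.e., x_i(t) = Σ_j w_{ij}(t) x_j(t−1) with nonnegative weights summing to 1 and Σ_{j∈M(t)} w_{ij}(t) ≥ α. Let Π_t be the orthogonal projection onto the orthogonal complement of dir(X_{M(t)}(t−1)), the span of differences of round-(t−1) values of processes in M(t). Then Δ_{Π_t}(X(t)) ≤ (1−α) · Δ_{Π_t}(X(t−1)), where Δ_Π(X) = max_{x,y∈X} ‖Π(x−y)‖ and X(t) = {x_i(t) : i ∈ [n]}. -/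
/-!
The projection `P` onto `Dᗮ` is constant on the broadcasting set `M`, because the differences of
the points of `M` lie in `D`. So all of row `i`'s weight on `M` can be moved onto a single `m ∈ M`,
and `P (x' i)` becomes `α • P (p m)` plus a nonnegative combination of the `P (p l)` of total
weight `1 - α`. The term `α • P (p m)` cancels in `P (x' i - x' j)`. What remains is a difference
of two combinations of total weight `1 - α`, which is `1 - α` times the distance between two points
of the convex hull of the `P (p l)`. That distance is at most the distance between two of the
`P (p l)`.
-/

open Finset

section

variable {ι E : Type*} [Fintype ι] [NormedAddCommGroup E] [NormedSpace ℝ E]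

theorem norm_sum_smul_sub_sum_smul_le {v : ι → E} {a b : ι → ℝ} {c K : ℝ}
    (ha : ∀ l, 0 ≤ a l) (hb : ∀ l, 0 ≤ b l) (hac : ∑ l, a l = c) (hbc : ∑ l, b l = c)
    (hK : ∀ l s, ‖v l - v s‖ ≤ K) :
    ‖∑ l, a l • v l - ∑ l, b l • v l‖ ≤ c * K := by
  obtain rfl | hc := (hac ▸ sum_nonneg fun l _ => ha l : 0 ≤ c).eq_or_lt
  · have hzero : ∀ u : ι → ℝ, (∀ l, 0 ≤ u l) → ∑ l, u l = 0 → ∑ l, u l • v l = 0 :=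
      fun u hu hu0 => sum_eq_zero fun l hl => by
        rw [(sum_eq_zero_iff_of_nonneg fun l _ => hu l).mp hu0 l hl, zero_smul]
    simp [hzero a ha hac, hzero b hb hbc]
  · have hsum : ∀ u : ι → ℝ, ∑ l, u l = c →
        ∑ l, u l • v l = c • univ.centerMass u v := fun u hu => by
      rw [centerMass, hu, smul_inv_smul₀ hc.ne']
    have hmem : ∀ u : ι → ℝ, (∀ l, 0 ≤ u l) → ∑ l, u l = c →
        univ.centerMass u v ∈ convexHull ℝ (Set.range v) := fun u hu huc =>
      univ.centerMass_mem_convexHull (fun l _ => hu l) (huc ▸ hc) fun l _ => ⟨l, rfl⟩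
    obtain ⟨_, ⟨l, rfl⟩, _, ⟨s, rfl⟩, hdist⟩ :=
      convexHull_exists_dist_ge2 (hmem a ha hac) (hmem b hb hbc)
    rw [hsum a hac, hsum b hbc, ← smul_sub, norm_smul, Real.norm_of_nonneg hc.le,
      ← dist_eq_norm]
    exact mul_le_mul_of_nonneg_left (hdist.trans ((dist_eq_norm _ _).trans_le (hK l s))) hc.le

theorem exists_sum_smul_eq_smul_add_sum_smul {f : ι → E} {M : Finset ι} {m : ι}
    (hf : ∀ l ∈ M, f l = f m) {w : ι → ℝ} (hw : ∀ l, 0 ≤ w l) (hw1 : ∑ l, w l = 1) {α : ℝ}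
    (hα : α ≤ ∑ l ∈ M, w l) :
    ∃ a : ι → ℝ, (∀ l, 0 ≤ a l) ∧ ∑ l, a l = 1 - α ∧
      ∑ l, w l • f l = α • f m + ∑ l, a l • f l := by
  classical
  set a : ι → ℝ := fun l => (if l = m then ∑ l ∈ M, w l - α else 0) + if l ∈ Mᶜ then w l else 0
  have hsplit := sum_add_sum_compl M w
  refine ⟨a, fun l => ?_, ?_, ?_⟩
  · have := hw l
    simp only [a]
    split_ifs <;> linarith
  · simp only [a, sum_add_distrib, sum_ite_eq', mem_univ, if_true, sum_ite_mem, univ_inter]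
    linarith
  · have hwf : ∑ l ∈ M, w l • f l = (∑ l ∈ M, w l) • f m := by
      rw [sum_smul]
      exact sum_congr rfl fun l hl => by rw [hf l hl]
    simp only [a, add_smul, ite_smul, zero_smul, sum_add_distrib, sum_ite_eq', mem_univ, if_true,
      sum_ite_mem, univ_inter]
    rw [← sum_add_sum_compl M, hwf]
    module

theorem norm_sum_smul_sub_sum_smul_le_of_const_on {f : ι → E} {M : Finset ι} {m : ι}
    (hf : ∀ l ∈ M, f l = f m) {w w' : ι → ℝ} (hw : ∀ l, 0 ≤ w l) (hw' : ∀ l, 0 ≤ w' l)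
    (hw1 : ∑ l, w l = 1) (hw'1 : ∑ l, w' l = 1) {α : ℝ} (hα : α ≤ ∑ l ∈ M, w l)
    (hα' : α ≤ ∑ l ∈ M, w' l) {K : ℝ} (hK : ∀ l s, ‖f l - f s‖ ≤ K) :
    ‖∑ l, w l • f l - ∑ l, w' l • f l‖ ≤ (1 - α) * K := by
  obtain ⟨a, ha, ha1, hwa⟩ := exists_sum_smul_eq_smul_add_sum_smul hf hw hw1 hα
  obtain ⟨b, hb, hb1, hwb⟩ := exists_sum_smul_eq_smul_add_sum_smul hf hw' hw'1 hα'
  rw [hwa, hwb, add_sub_add_left_eq_sub]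
  exact norm_sum_smul_sub_sum_smul_le ha hb ha1 hb1 hK

end

theorem thickness_one_round_contraction {d n : ℕ} (hn : 0 < n)
    (p : Fin n → EuclideanSpace ℝ (Fin d))
    (M : Finset (Fin n)) (hM : M.Nonempty)
    (w : Fin n → Fin n → ℝ)
    (hw : ∀ i j, 0 ≤ w i j) (hw1 : ∀ i, ∑ j, w i j = 1)
    (α : ℝ)
    (hαM : ∀ i, α ≤ ∑ j ∈ M, w i j)
    (x' : Fin n → EuclideanSpace ℝ (Fin d))
    (hx' : ∀ i, x' i = ∑ j, w i j • p j)
    (D : Submodule ℝ (EuclideanSpace ℝ (Fin d)))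
    (hD : D = Submodule.span ℝ {u | ∃ i ∈ M, ∃ j ∈ M, u = p i - p j}) :
    ∀ i j : Fin n,
      ‖(Submodule.orthogonalProjectionOnto Dᗮ (x' i - x' j) : EuclideanSpace ℝ (Fin d))‖ ≤
        (1 - α) *
          ((Finset.univ ×ˢ Finset.univ).sup'
            (by simp [Finset.univ_nonempty_iff, ← Fin.pos_iff_nonempty, hn])
            fun q : Fin n × Fin n =>
              ‖(Submodule.orthogonalProjectionOnto Dᗮ (p q.1 - p q.2) : EuclideanSpace ℝ (Fin d))‖) := by
  intro i j
  obtain ⟨m, hm⟩ := hM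
  set P := Dᗮ.orthogonalProjectionOnto
  have hPM : ∀ l ∈ M, P (p l) = P (p m) := fun l hl => by
    rw [← sub_eq_zero, ← map_sub]
    exact Submodule.orthogonalProjectionOnto_orthogonal_apply_eq_zero
      (hD ▸ Submodule.subset_span ⟨l, hl, m, hm, rfl⟩)
  have hPx : ∀ k, P (x' k) = ∑ l, w k l • P (p l) := fun k => by
    simp only [hx', map_sum, map_smul]
  calc ‖(P (x' i - x' j) : EuclideanSpace ℝ (Fin d))‖
      = ‖∑ l, w i l • P (p l) - ∑ l, w j l • P (p l)‖ := by
        rw [← Submodule.coe_norm, map_sub, hPx, hPx]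
    _ ≤ _ := norm_sum_smul_sub_sum_smul_le_of_const_on hPM (hw i) (hw j) (hw1 i) (hw1 j) (hαM i)
        (hαM j) fun l s => ?_
  calc ‖P (p l) - P (p s)‖
      = ‖(P (p l - p s) : EuclideanSpace ℝ (Fin d))‖ := by
        rw [map_sub]; rfl
    -- Without the ascription below, unifying with the statement's `sup'` times out.
    _ ≤ _ := le_sup' (fun q : Fin n × Fin n => ‖(P (p q.1 - p q.2) : EuclideanSpace ℝ (Fin d))‖)
        (mem_product.mpr ⟨mem_univ l, mem_univ s⟩ : (l, s) ∈ univ ×ˢ (univ : Finset (Fin n)))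
end
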